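/- arXiv:1502.05014 — 4 statements merged into one kernel-verified Lean document; each statement's English description precedes it below -/
import Mathlib

section
/- If J is a strongly stable monomial ideal in K[x_1,...,x_n], m is a monomial divisible by neither a nor b (where a, b are variables with a lexicographically greater than b), and the monomial m·a^α·b^β lies in J with β > α + t for some nonnegative integer t, then the monomial m·a^(β−t)·b^(α+t) also lies in J. -/
open Finsupp

/-- A monomial in `n` variables, recorded by its exponent vector.
Variable `x_1` corresponds to index `0`, and `x_1 > x_2 > ... > x_n`
in the lexicographic variable order, so `a >_lex b` means `a < b` as indices. -/
abbrev Mon (n : ℕ) := Fin n →₀ ℕ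

/-- The set of monomials of a monomial ideal: closed under multiplication by monomials. -/
def IsMonSet {n : ℕ} (S : Set (Mon n)) : Prop :=
  ∀ m ∈ S, ∀ f : Mon n, m + f ∈ S

/-- Strongly stable: if `x_i · m ∈ S` and `j < i` then `x_j · m ∈ S`. -/
def StronglyStable {n : ℕ} (S : Set (Mon n)) : Prop :=
  ∀ m : Mon n, ∀ i j : Fin n, j < i →
    m + Finsupp.single i 1 ∈ S → m + Finsupp.single j 1 ∈ S

/-- Total degree of a monomial. -/
def mdeg {n : ℕ} (m : Mon n) : ℕ := m.sum fun _ e => e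

/-- `u >_lex v` : at the first variable where they differ, `u` has the larger exponent. -/
def LexGT {n : ℕ} (u v : Mon n) : Prop :=
  ∃ i : Fin n, v i < u i ∧ ∀ j : Fin n, j < i → u j = v j

theorem StronglyStable.add_single_of_lt {n : ℕ} {J : Set (Mon n)} (hss : StronglyStable J)
    {a b : Fin n} (hab : a < b) (u : Mon n) (k : ℕ) (hu : u + single b k ∈ J) :
    u + single a k ∈ J := by
  induction k generalizing u with
  | zero => simpa using hu
  | succ k ih =>
    rw [single_add, ← add_assoc] at hu
    have hstep : u + single a 1 + single b k ∈ J := by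
      simpa only [add_right_comm u] using hss _ b a hab hu
    simpa only [add_assoc, ← single_add, add_comm 1 k] using ih _ hstep

theorem stmt0_general {n : ℕ} (J : Set (Mon n)) (hss : StronglyStable J)
    (a b : Fin n) (hab : a < b) (m : Mon n)
    (α β t : ℕ) (hβ : α + t < β)
    (hmem : m + Finsupp.single a α + Finsupp.single b β ∈ J) :
    m + Finsupp.single a (β - t) + Finsupp.single b (α + t) ∈ J := by
  obtain ⟨k, rfl⟩ : ∃ k, β = α + t + k := ⟨β - (α + t), by omega⟩
  rw [single_add, ← add_assoc] at hmem
  have h := hss.add_single_of_lt hab _ k hmem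
  rwa [add_right_comm, add_assoc m, ← single_add, show α + k = α + t + k - t by omega] at h

/-- If `J` is strongly stable, `m` is divisible by neither `a` nor `b` (with `a >_lex b`,
i.e. `a < b` as indices), `m·a^α·b^β ∈ J` and `β > α + t`, then
`m·a^(β-t)·b^(α+t) ∈ J`. -/
theorem stmt0 {n : ℕ} (J : Set (Mon n)) (hmon : IsMonSet J) (hss : StronglyStable J)
    (a b : Fin n) (hab : a < b) (m : Mon n) (hma : m a = 0) (hmb : m b = 0)
    (α β t : ℕ) (hβ : α + t < β)
    (hmem : m + Finsupp.single a α + Finsupp.single b β ∈ J) :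
    m + Finsupp.single a (β - t) + Finsupp.single b (α + t) ∈ J :=
  stmt0_general J hss a b hab m α β t hβ hmem
end

section
/- Let J be a strongly stable monomial ideal and fix variables a >_lex b and an integer t ≥ 0. Then J is contained in Shift_{a,b,t}(J'), for any monomial ideal J' containing J. In particular, every monomial of J belongs to the (a,b,t)-shift of any monomial ideal containing J. -/
open Finsupp

/-- Membership in the `(a,b,t)`-shift of a monomial ideal `I`, as a set of monomials. -/
def InShift {n : ℕ} (I : Set (Mon n)) (a b : Fin n) (t : ℕ) (g : Mon n) : Prop :=
  ∃ f : Mon n, f a = 0 ∧ f b = 0 ∧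
    ((∃ s r, r < t ∧ g = f + Finsupp.single a s + Finsupp.single b r ∧ g ∈ I) ∨
     (∃ s, g = f + Finsupp.single a s + Finsupp.single b (s + t) ∧ g ∈ I) ∨
     (∃ s l, s < l ∧ g = f + Finsupp.single a l + Finsupp.single b (s + t) ∧
        (f + Finsupp.single a l + Finsupp.single b (s + t) ∈ I ∨
         f + Finsupp.single a s + Finsupp.single b (l + t) ∈ I)) ∨
     (∃ s l, s < l ∧ g = f + Finsupp.single a s + Finsupp.single b (l + t) ∧
        f + Finsupp.single a l + Finsupp.single b (s + t) ∈ I ∧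
        f + Finsupp.single a s + Finsupp.single b (l + t) ∈ I))

/-!
Write `m = f·a^s·b^r`. Each of the four families spanning the shift covers a range of `(s, r)`
in which `m ∈ I` alone suffices, except when `r - t > s`: there the shift also needs
`f·a^(r-t)·b^(s+t) ∈ I`, which strong stability gives by moving `r - t - s` from `b` to `a`.
-/

theorem Finsupp.exists_eq_add_single_add_single {α M : Type*} [AddCommMonoid M] {a b : α}
    (hab : a ≠ b) (m : α →₀ M) :
    ∃ (f : α →₀ M) (s r : M), f a = 0 ∧ f b = 0 ∧ m = f + single a s + single b r := by
  refine ⟨(m.erase a).erase b, m a, m b, by simp [erase_ne hab], by simp, ?_⟩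
  rw [add_right_comm, ← erase_ne hab.symm, erase_add_single, erase_add_single]

theorem StronglyStable.mem_move_exponent {n : ℕ} {J : Set (Mon n)} (hJ : StronglyStable J)
    {i j : Fin n} (hji : j < i) (u : Mon n) {p q d : ℕ}
    (h : u + single j p + single i (q + d) ∈ J) : u + single j (p + d) + single i q ∈ J := by
  induction d generalizing p with
  | zero => simpa using h
  | succ d ih =>
    have step := hJ (u + single j p + single i (q + d)) i j hji
      (by rwa [add_assoc _ (single i _), ← single_add])
    rw [add_right_comm, add_assoc u, ← single_add] at step
    simpa only [add_right_comm p 1 d, add_assoc p] using ih step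

theorem stmt1_general {n : ℕ} (J I : Set (Mon n)) (hss : StronglyStable J)
    (hJI : J ⊆ I) (a b : Fin n) (hab : a < b) (t : ℕ) :
    ∀ m ∈ J, InShift I a b t m := by
  intro m hm
  obtain ⟨f, s, r, hfa, hfb, rfl⟩ := exists_eq_add_single_add_single hab.ne m
  have hmI := hJI hm
  refine ⟨f, hfa, hfb, ?_⟩
  rcases lt_or_ge r t with hrt | hrt
  · exact Or.inl ⟨s, r, hrt, rfl, hmI⟩
  obtain ⟨k, rfl⟩ := Nat.exists_eq_add_of_le' hrt
  rcases lt_trichotomy k s with hks | rfl | hsk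
  · exact Or.inr (Or.inr (Or.inl ⟨k, s, hks, rfl, Or.inl hmI⟩))
  · exact Or.inr (Or.inl ⟨k, rfl, hmI⟩)
  · obtain ⟨d, rfl⟩ := Nat.exists_eq_add_of_le hsk.le
    rw [add_right_comm s d t] at hm
    exact Or.inr (Or.inr (Or.inr
      ⟨s, s + d, hsk, rfl, hJI (hss.mem_move_exponent hab f hm), hmI⟩))

/-- A strongly stable monomial ideal `J` is contained in `Shift_{a,b,t}(I)` for
any monomial ideal `I` containing `J`. -/
theorem stmt1 {n : ℕ} (J I : Set (Mon n)) (hJmon : IsMonSet J) (hss : StronglyStable J)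
    (hImon : IsMonSet I) (hJI : J ⊆ I) (a b : Fin n) (hab : a < b) (t : ℕ) :
    ∀ m ∈ J, InShift I a b t m :=
  stmt1_general J I hss hJI a b hab t
end

section
/- For a monomial ideal I in K[x_1,...,x_n] and variables a >_lex b, the (a,b,t)-shift of I has the same Hilbert function as I. -/
/-!
The map `f·a^s·b^r ↦ f·a^(r-t)·b^(s+t)` is a degree-preserving involution exchanging the monomials
with `r > s + t` and those with `t ≤ r < s + t`. Among the pairs it forms, the shift keeps those
lying entirely in `I` or entirely outside it, and replaces the member in `I` of every other pair by
its partner with `r < s + t`; all other monomials are kept as they are. So the shift is the image of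
`I` under an injective degree-preserving map.
-/

open Finsupp

section Compression

variable {α : Type*} (σ : α → α) (U L : Set α)

/-- Of a pair `{g, σ g}` with `g ∈ U` this keeps both, the `L`-member, or neither, according as
`I` meets it in two, one or no points. -/
def compression (I : Set α) : Set α :=
  {h | (h ∉ U ∧ h ∉ L ∧ h ∈ I) ∨ (h ∈ U ∧ h ∈ I ∧ σ h ∈ I) ∨ (h ∈ L ∧ (h ∈ I ∨ σ h ∈ I))}

open Classical in
noncomputable def compressionMap (I : Set α) (g : α) : α :=
  if g ∈ U ∧ σ g ∉ I then σ g else g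

variable {σ U L}

theorem injOn_compressionMap (hσ : Set.InjOn σ U) (I : Set α) :
    Set.InjOn (compressionMap σ U I) I := by
  intro g₁ hg₁ g₂ hg₂ heq
  unfold compressionMap at heq
  split_ifs at heq with h₁ h₂ h₂
  · exact hσ h₁.1 h₂.1 heq
  · exact absurd (heq ▸ hg₂) h₁.2
  · exact absurd (heq ▸ hg₁) h₂.2
  · exact heq

theorem image_compressionMap (hUL : Set.MapsTo σ U L) (hLU : Set.MapsTo σ L U)
    (hinv : ∀ g ∈ U ∪ L, σ (σ g) = g) (hdisj : Disjoint U L) (I : Set α) :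
    compressionMap σ U I '' I = compression σ U L I := by
  ext h
  constructor
  · rintro ⟨g, hg, rfl⟩
    unfold compressionMap
    split_ifs with hmove
    · refine Or.inr (Or.inr ⟨hUL hmove.1, Or.inr ?_⟩)
      rwa [hinv g (Or.inl hmove.1)]
    · by_cases hU : g ∈ U
      · exact Or.inr (Or.inl ⟨hU, hg, not_not.mp fun h => hmove ⟨hU, h⟩⟩)
      · by_cases hL : g ∈ L
        · exact Or.inr (Or.inr ⟨hL, Or.inl hg⟩)
        · exact Or.inl ⟨hU, hL, hg⟩
  · have fixed : ∀ g ∈ I, (g ∉ U ∨ σ g ∈ I) → compressionMap σ U I g = g := fun g _ hg =>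
      if_neg fun hmove => hg.elim (· hmove.1) hmove.2
    rintro (⟨hU, -, hI⟩ | ⟨-, hI, hσI⟩ | ⟨hL, hI | hσI⟩)
    · exact ⟨h, hI, fixed h hI (Or.inl hU)⟩
    · exact ⟨h, hI, fixed h hI (Or.inr hσI)⟩
    · exact ⟨h, hI, fixed h hI (Or.inl (Set.disjoint_right.mp hdisj hL))⟩
    · by_cases hI : h ∈ I
      · exact ⟨h, hI, fixed h hI (Or.inl (Set.disjoint_right.mp hdisj hL))⟩
      · have hσσ : σ (σ h) = h := hinv h (Or.inr hL)
        refine ⟨σ h, hσI, ?_⟩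
        rw [compressionMap, if_pos ⟨hLU hL, hσσ.symm ▸ hI⟩, hσσ]

theorem ncard_compression (hUL : Set.MapsTo σ U L) (hLU : Set.MapsTo σ L U)
    (hinv : ∀ g ∈ U ∪ L, σ (σ g) = g) (hdisj : Disjoint U L) (I : Set α) :
    (compression σ U L I).ncard = I.ncard := by
  rw [← image_compressionMap hUL hLU hinv hdisj]
  exact (injOn_compressionMap (Set.LeftInvOn.injOn fun g hg => hinv g (Or.inl hg)) I).ncard_image

theorem compression_inter {D : Set α} (hD : ∀ g ∈ U ∪ L, σ g ∈ D ↔ g ∈ D) (I : Set α) :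
    compression σ U L (I ∩ D) = compression σ U L I ∩ D := by
  ext h
  have := hD h
  simp only [compression, Set.mem_inter_iff, Set.mem_ofPred_eq, Set.mem_union] at this ⊢
  tauto

end Compression

section Shift

variable {n : ℕ} {a b : Fin n}

theorem mdeg_eq_degree (m : Mon n) : mdeg m = m.degree := rfl

theorem add_single_add_single_apply_left (hab : a ≠ b) {f : Mon n} (hfa : f a = 0) (s r : ℕ) :
    (f + single a s + single b r) a = s := by
  simp [hfa, single_eq_of_ne' hab.symm]

theorem add_single_add_single_apply_right (hab : a ≠ b) {f : Mon n} (hfb : f b = 0) (s r : ℕ) :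
    (f + single a s + single b r) b = r := by
  simp [hfb, single_eq_of_ne' hab]

theorem erase_erase_apply_left (hab : a ≠ b) (g : Mon n) : (g.erase a).erase b a = 0 := by
  simp [erase_ne hab]

theorem erase_erase_apply_right (g : Mon n) : (g.erase a).erase b b = 0 := by
  simp

theorem erase_erase_add_single_add_single (hab : a ≠ b) {f : Mon n} (hfa : f a = 0)
    (hfb : f b = 0) (s r : ℕ) : ((f + single a s + single b r).erase a).erase b = f := by
  ext i
  simp only [erase_apply, Finsupp.add_apply, single_apply]
  split_ifs <;> simp_all

theorem erase_erase_add_single_add_single_self (hab : a ≠ b) (g : Mon n) :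
    (g.erase a).erase b + single a (g a) + single b (g b) = g := by
  ext i
  simp only [erase_apply, Finsupp.add_apply, single_apply]
  split_ifs <;> subst_vars <;> simp_all

/-- Writing `g = f·a^s·b^(r+t)` with `f` free of `a` and `b`, this is `f·a^r·b^(s+t)`: the
monomials paired in the definition of the shift. It is only meaningful for `t ≤ g b`, because of
the truncated subtraction. -/
noncomputable def reflect (a b : Fin n) (t : ℕ) (g : Mon n) : Mon n :=
  (g.erase a).erase b + single a (g b - t) + single b (g a + t)

theorem reflect_add_single_add_single (hab : a ≠ b) {f : Mon n} (hfa : f a = 0) (hfb : f b = 0)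
    (t s r : ℕ) :
    reflect a b t (f + single a s + single b (r + t)) = f + single a r + single b (s + t) := by
  rw [reflect, erase_erase_add_single_add_single hab hfa hfb,
    add_single_add_single_apply_left hab hfa, add_single_add_single_apply_right hab hfb,
    Nat.add_sub_cancel]

theorem reflect_apply_left (hab : a ≠ b) (t : ℕ) (g : Mon n) : reflect a b t g a = g b - t :=
  add_single_add_single_apply_left hab (erase_erase_apply_left hab g) _ _

theorem reflect_apply_right (hab : a ≠ b) (t : ℕ) (g : Mon n) : reflect a b t g b = g a + t :=
  add_single_add_single_apply_right hab (erase_erase_apply_right g) _ _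

theorem reflect_reflect (hab : a ≠ b) {t : ℕ} {g : Mon n} (ht : t ≤ g b) :
    reflect a b t (reflect a b t g) = g := by
  calc reflect a b t (reflect a b t g)
      = (g.erase a).erase b + single a (g a) + single b (g b - t + t) :=
        reflect_add_single_add_single hab (erase_erase_apply_left hab g)
          (erase_erase_apply_right g) t (g b - t) (g a)
    _ = g := by rw [Nat.sub_add_cancel ht, erase_erase_add_single_add_single_self hab]

theorem mdeg_reflect (hab : a ≠ b) {t : ℕ} {g : Mon n} (ht : t ≤ g b) :
    mdeg (reflect a b t g) = mdeg g := by
  conv_rhs => rw [← erase_erase_add_single_add_single_self hab g]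
  simp only [reflect, mdeg_eq_degree, map_add, degree_single]
  omega

/-- In the plane of the exponents `(s, r)` of `a` and `b`, `reflect` is the reflection in the
line `r = s + t`, exchanging the region above it with the strip `t ≤ r` below it. -/
def shiftAbove (a b : Fin n) (t : ℕ) : Set (Mon n) := {g | g a + t < g b}

def shiftBelow (a b : Fin n) (t : ℕ) : Set (Mon n) := {g | t ≤ g b ∧ g b < g a + t}

variable {t : ℕ} {g : Mon n}

theorem mem_shiftAbove : g ∈ shiftAbove a b t ↔ g a + t < g b := Iff.rfl

theorem mem_shiftBelow : g ∈ shiftBelow a b t ↔ t ≤ g b ∧ g b < g a + t := Iff.rfl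

theorem disjoint_shiftAbove_shiftBelow : Disjoint (shiftAbove a b t) (shiftBelow a b t) :=
  Set.disjoint_left.mpr fun _ hU hL => by
    rw [mem_shiftAbove] at hU
    rw [mem_shiftBelow] at hL
    omega

theorem le_of_mem_shiftAbove_union_shiftBelow (hg : g ∈ shiftAbove a b t ∪ shiftBelow a b t) :
    t ≤ g b := by
  rcases hg with hU | ⟨htb, -⟩
  · rw [mem_shiftAbove] at hU
    omega
  · exact htb

theorem mapsTo_reflect_shiftAbove (hab : a ≠ b) :
    Set.MapsTo (reflect a b t) (shiftAbove a b t) (shiftBelow a b t) := fun g hg => by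
  rw [mem_shiftAbove] at hg
  rw [mem_shiftBelow, reflect_apply_left hab, reflect_apply_right hab]
  omega

theorem mapsTo_reflect_shiftBelow (hab : a ≠ b) :
    Set.MapsTo (reflect a b t) (shiftBelow a b t) (shiftAbove a b t) := fun g hg => by
  rw [mem_shiftBelow] at hg
  rw [mem_shiftAbove, reflect_apply_left hab, reflect_apply_right hab]
  omega

theorem inShift_iff_mem_compression (hab : a ≠ b) (I : Set (Mon n)) :
    InShift I a b t g ↔
      g ∈ compression (reflect a b t) (shiftAbove a b t) (shiftBelow a b t) I := by
  constructor
  · rintro ⟨f, hfa, hfb, ⟨s, r, hr, rfl, hI⟩ | ⟨s, rfl, hI⟩ | ⟨s, l, hsl, rfl, hI⟩ |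
      ⟨s, l, hsl, rfl, hI⟩⟩ <;>
    simp only [compression, mem_shiftAbove, mem_shiftBelow, Set.mem_ofPred_eq,
      add_single_add_single_apply_left hab hfa, add_single_add_single_apply_right hab hfb,
      reflect_add_single_add_single hab hfa hfb]
    · exact Or.inl ⟨by omega, by omega, hI⟩
    · exact Or.inl ⟨by omega, by omega, hI⟩
    · exact Or.inr (Or.inr ⟨⟨by omega, by omega⟩, hI⟩)
    · exact Or.inr (Or.inl ⟨by omega, hI.2, hI.1⟩)
  · set f := (g.erase a).erase b
    have hfa : f a = 0 := erase_erase_apply_left hab g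
    have hfb : f b = 0 := erase_erase_apply_right g
    have hg : ∀ {r}, r + t = g b → g = f + single a (g a) + single b (r + t) := fun hr => by
      rw [hr, erase_erase_add_single_add_single_self hab]
    rintro (⟨hU, hL, hI⟩ | ⟨hU, hI, hσI⟩ | ⟨hL, hI⟩)
    · rw [mem_shiftAbove] at hU
      rw [mem_shiftBelow] at hL
      refine ⟨f, hfa, hfb, ?_⟩
      rcases lt_or_ge (g b) t with hbt | htb
      · exact Or.inl ⟨g a, g b, hbt, (erase_erase_add_single_add_single_self hab g).symm, hI⟩
      · exact Or.inr (Or.inl ⟨g a, hg (by omega), hI⟩)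
    · rw [mem_shiftAbove] at hU
      refine ⟨f, hfa, hfb,
        Or.inr (Or.inr (Or.inr ⟨g a, g b - t, by omega, hg (by omega), hσI, ?_⟩))⟩
      rwa [← hg (by omega)]
    · obtain ⟨htb, hlt⟩ := hL
      refine ⟨f, hfa, hfb, Or.inr (Or.inr (Or.inl ⟨g b - t, g a, by omega, hg (by omega), ?_⟩))⟩
      rwa [← hg (by omega)]

end Shift

theorem stmt7_general {n : ℕ} (I : Set (Mon n))
    (a b : Fin n) (hab : a < b) (t : ℕ) :
    ∀ d : ℕ, Set.ncard {m : Mon n | m ∈ I ∧ mdeg m = d} =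
      Set.ncard {m : Mon n | InShift I a b t m ∧ mdeg m = d} := by
  intro d
  have hinv : ∀ g ∈ shiftAbove a b t ∪ shiftBelow a b t, reflect a b t (reflect a b t g) = g :=
    fun g hg => reflect_reflect hab.ne (le_of_mem_shiftAbove_union_shiftBelow hg)
  have hdeg : ∀ g ∈ shiftAbove a b t ∪ shiftBelow a b t, mdeg (reflect a b t g) = d ↔ mdeg g = d :=
    fun g hg => by rw [mdeg_reflect hab.ne (le_of_mem_shiftAbove_union_shiftBelow hg)]
  have hshift : {m | InShift I a b t m ∧ mdeg m = d} =
      compression (reflect a b t) (shiftAbove a b t) (shiftBelow a b t) I ∩ {m | mdeg m = d} :=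
    Set.ext fun m => and_congr_left' (inShift_iff_mem_compression hab.ne I)
  rw [hshift, ← compression_inter hdeg]
  exact (ncard_compression (mapsTo_reflect_shiftAbove hab.ne) (mapsTo_reflect_shiftBelow hab.ne)
    hinv disjoint_shiftAbove_shiftBelow _).symm

/-- The `(a,b,t)`-shift of a monomial ideal has the same Hilbert function:
in each degree it contains as many monomials as `I` does. -/
theorem stmt7 {n : ℕ} (I : Set (Mon n)) (hmon : IsMonSet I)
    (a b : Fin n) (hab : a < b) (t : ℕ) :
    ∀ d : ℕ, Set.ncard {m : Mon n | m ∈ I ∧ mdeg m = d} =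
      Set.ncard {m : Mon n | InShift I a b t m ∧ mdeg m = d} :=
  stmt7_general I a b hab t
end

section
/- If L̃ = L_(1)A + ... + L_(n)A is a piecewise lex ideal in A = K[x_1,...,x_n] and m is a monomial in L̃ with m = m'·a^α·b^β for variables a >_lex b with a, b not dividing m', and N = β − (α + t) > 0 for an integer t ≥ 0, then m·a^N/b^N = m'·a^(β−t)·b^(α+t) is a monomial in L̃. -/
open Finsupp

/-- `m` involves only the first `i` variables. -/
def SupportedOn {n : ℕ} (i : ℕ) (m : Mon n) : Prop :=
  ∀ j : Fin n, i ≤ (j : ℕ) → m j = 0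

/-- `L` is (the monomial set of) a lex ideal of `K[x_1,...,x_i]`. -/
def IsLexOn {n : ℕ} (i : ℕ) (L : Set (Mon n)) : Prop :=
  (∀ m ∈ L, SupportedOn i m) ∧
  (∀ m ∈ L, ∀ f : Mon n, SupportedOn i f → m + f ∈ L) ∧
  (∀ u v : Mon n, SupportedOn i u → mdeg u = mdeg v → v ∈ L → LexGT u v → u ∈ L)

/-- The extension of a monomial ideal to the full polynomial ring. -/
def extIdeal {n : ℕ} (L : Set (Mon n)) : Set (Mon n) :=
  {g | ∃ m ∈ L, ∀ k, m k ≤ g k}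

/-- `S` is the monomial set of a piecewise lex ideal `L̃ = L_(1)A + ... + L_(n)A`. -/
def IsPiecewiseLex {n : ℕ} (S : Set (Mon n)) : Prop :=
  ∃ L : Fin n → Set (Mon n),
    (∀ i : Fin n, IsLexOn ((i : ℕ) + 1) (L i)) ∧ S = ⋃ i, extIdeal (L i)

/-!
Write `m = m'·a^α·b^β` and let `m ∈ L_(i)A`. Membership in `L_(i)A` only depends on the part of a
monomial in the first `i` variables, and that part of `m` lies in `L_(i)`. If `b` is among these
variables, moving exponent from `b` to `a` keeps the degree of this part and makes it lex larger,
so it stays in the lex segment `L_(i)`. Otherwise the part of `m` in the first `i` variables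
already divides `m'·a^(β-t)·b^(α+t)`, since the exponent of `a` only grows.
-/

variable {n : ℕ}

lemma mdeg_add (x y : Mon n) : mdeg (x + y) = mdeg x + mdeg y :=
  sum_add_index' (fun _ => rfl) (fun _ _ _ => rfl)

lemma mdeg_single (j : Fin n) (c : ℕ) : mdeg (single j c) = c :=
  sum_single_index rfl

lemma lexGT_add_single_add_single (m : Mon n) {a b : Fin n} (hab : a < b) {p p' : ℕ}
    (q q' : ℕ) (hp : p < p') :
    LexGT (m + single a p' + single b q') (m + single a p + single b q) := by
  refine ⟨a, ?_, fun j hj => ?_⟩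
  · simp [hab.ne', hp]
  · simp [hj.ne', (hj.trans hab).ne']

def truncate (I : ℕ) (g : Mon n) : Mon n :=
  g.filter fun k => (k : ℕ) < I

lemma truncate_apply (I : ℕ) (g : Mon n) (k : Fin n) :
    truncate I g k = if (k : ℕ) < I then g k else 0 :=
  filter_apply _ _ _

lemma truncate_add (I : ℕ) (x y : Mon n) : truncate I (x + y) = truncate I x + truncate I y :=
  filter_add

lemma truncate_single {I : ℕ} {k : Fin n} (hk : (k : ℕ) < I) (c : ℕ) :
    truncate I (single k c) = single k c :=
  filter_single_of_pos _ hk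

lemma supportedOn_truncate (I : ℕ) (g : Mon n) : SupportedOn I (truncate I g) := by
  intro k hk
  simp [truncate_apply, Nat.not_lt.mpr hk]

lemma truncate_le (I : ℕ) (g : Mon n) : truncate I g ≤ g := by
  intro k
  rw [truncate_apply]
  split_ifs <;> simp

lemma le_truncate_of_le {I : ℕ} {w g : Mon n} (hw : SupportedOn I w) (h : w ≤ g) :
    w ≤ truncate I g := by
  intro k
  rw [truncate_apply]
  split_ifs with hk
  · exact h k
  · exact (hw k (Nat.not_lt.mp hk)).le

lemma IsLexOn.mem_extIdeal_iff {I : ℕ} {L : Set (Mon n)} (hL : IsLexOn I L) (g : Mon n) :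
    g ∈ extIdeal L ↔ truncate I g ∈ L := by
  refine ⟨fun ⟨w, hwL, hwg⟩ => ?_, fun h => ⟨_, h, truncate_le I g⟩⟩
  have hw_le : w ≤ truncate I g := le_truncate_of_le (hL.1 w hwL) hwg
  rw [← add_tsub_cancel_of_le hw_le]
  refine hL.2.1 w hwL _ fun k hk => ?_
  simp [supportedOn_truncate I g k hk]

lemma IsLexOn.add_single_add_single_mem_extIdeal {I : ℕ} {L : Set (Mon n)} (hL : IsLexOn I L)
    (m : Mon n) {a b : Fin n} (hab : a < b) {p q p' q' : ℕ} (hp : p < p')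
    (hpq : p + q = p' + q') (h : m + single a p + single b q ∈ extIdeal L) :
    m + single a p' + single b q' ∈ extIdeal L := by
  rw [hL.mem_extIdeal_iff] at h
  by_cases hb : (b : ℕ) < I
  · have ha : (a : ℕ) < I := lt_trans hab hb
    rw [hL.mem_extIdeal_iff]
    simp only [truncate_add, truncate_single ha, truncate_single hb] at h ⊢
    refine hL.2.2 _ _ ?_ ?_ h (lexGT_add_single_add_single _ hab q q' hp)
    · simpa only [truncate_add, truncate_single ha, truncate_single hb]
        using supportedOn_truncate I (m + single a p' + single b q')
    · simp only [mdeg_add, mdeg_single]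
      omega
  · refine ⟨_, h, fun k => ?_⟩
    simp only [truncate_apply, Finsupp.add_apply, single_apply]
    split_ifs <;> omega

theorem stmt9_general {n : ℕ} (S : Set (Mon n)) (hS : IsPiecewiseLex S)
    (a b : Fin n) (hab : a < b) (m' : Mon n)
    (α β t : ℕ) (hN : 0 < β - (α + t))
    (hmem : m' + Finsupp.single a α + Finsupp.single b β ∈ S) :
    m' + Finsupp.single a (β - t) + Finsupp.single b (α + t) ∈ S := by
  obtain ⟨L, hL, rfl⟩ := hS
  obtain ⟨i, hi⟩ := Set.mem_iUnion.mp hmem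
  exact Set.mem_iUnion.mpr
    ⟨i, (hL i).add_single_add_single_mem_extIdeal m' hab (by omega) (by omega) hi⟩

/-- If `L̃` is piecewise lex, `m = m'·a^α·b^β ∈ L̃` with `a,b ∤ m'`, `a >_lex b`
(i.e. `a < b` as indices) and `N = β - (α + t) > 0`, then
`m·a^N/b^N = m'·a^(β-t)·b^(α+t) ∈ L̃`. -/
theorem stmt9 {n : ℕ} (S : Set (Mon n)) (hS : IsPiecewiseLex S)
    (a b : Fin n) (hab : a < b) (m' : Mon n) (hma : m' a = 0) (hmb : m' b = 0)
    (α β t : ℕ) (hN : 0 < β - (α + t))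
    (hmem : m' + Finsupp.single a α + Finsupp.single b β ∈ S) :
    m' + Finsupp.single a (β - t) + Finsupp.single b (α + t) ∈ S :=
  stmt9_general S hS a b hab m' α β t hN hmem
end
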